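/- arXiv:1307.1406 — 5 statements merged into one kernel-verified Lean document; each statement's English description precedes it below -/
import Mathlib

section
/- E = 0 if and only if H = 0; that is, the sum of error terms over an alignment vanishes exactly when every position of the alignment is either a match or involves a wild card. (This is the correctness of step 1 of the 1-mismatch algorithm.) -/
/-- The error term `e_j = (T(i+j) - P(j))^2 * T(i+j) * P(j)` of alignment offset `i`
at pattern position `j`, computed in `ℤ`. Wild cards are encoded as `0`. -/
def errTerm {n m : ℕ} (T : Fin n → ℕ) (P : Fin m → ℕ) (i : ℕ) (h : i + m ≤ n)
    (j : Fin m) : ℤ :=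
  let t : ℤ := T ⟨i + j.val, lt_of_lt_of_le (Nat.add_lt_add_left j.isLt i) h⟩
  let p : ℤ := P j
  (t - p) ^ 2 * t * p

/-- `j` is a mismatch of alignment offset `i`: the aligned characters differ and
neither is a wild card (encoded as `0`). -/
def isMismatch {n m : ℕ} (T : Fin n → ℕ) (P : Fin m → ℕ) (i : ℕ) (h : i + m ≤ n)
    (j : Fin m) : Prop :=
  let t := T ⟨i + j.val, lt_of_lt_of_le (Nat.add_lt_add_left j.isLt i) h⟩
  t ≠ P j ∧ t ≠ 0 ∧ P j ≠ 0

instance {n m : ℕ} (T : Fin n → ℕ) (P : Fin m → ℕ) (i : ℕ) (h : i + m ≤ n) :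
    DecidablePred (isMismatch T P i h) := fun j => by
  unfold isMismatch; infer_instance

/-- The sum `E` of the error terms over an alignment vanishes
iff the wildcard-aware Hamming distance `H` of the alignment is zero. -/
theorem errSum_eq_zero_iff_hamming_eq_zero {n m : ℕ} (T : Fin n → ℕ) (P : Fin m → ℕ)
    (i : ℕ) (h : i + m ≤ n) :
    (∑ j : Fin m, errTerm T P i h j) = 0 ↔
      (Finset.univ.filter (isMismatch T P i h)).card = 0 := by
  have hnn : ∀ j ∈ Finset.univ, (0:ℤ) ≤ errTerm T P i h j := by
    intro j _
    unfold errTerm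
    positivity
  rw [Finset.sum_eq_zero_iff_of_nonneg hnn, Finset.card_eq_zero,
    Finset.filter_eq_empty_iff]
  constructor
  · intro hz j _ hmis
    obtain ⟨h1, h2, h3⟩ := hmis
    have hje := hz j (Finset.mem_univ j)
    unfold errTerm at hje
    rcases mul_eq_zero.mp hje with h' | hp
    · rcases mul_eq_zero.mp h' with hsq | ht
      · have : ((T ⟨i + j.val, lt_of_lt_of_le (Nat.add_lt_add_left j.isLt i) h⟩ : ℤ)
            - P j) = 0 := by
          exact pow_eq_zero_iff (two_ne_zero) |>.mp hsq
        exact h1 (by exact_mod_cast sub_eq_zero.mp this)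
      · exact h2 (by exact_mod_cast ht)
    · exact h3 (by exact_mod_cast hp)
  · intro hno j _
    have hj := hno (Finset.mem_univ j)
    simp only [isMismatch, not_and, not_not] at hj
    unfold errTerm
    by_cases heq : T ⟨i + j.val, lt_of_lt_of_le (Nat.add_lt_add_left j.isLt i) h⟩ = P j
    · simp [heq]
    by_cases ht : T ⟨i + j.val, lt_of_lt_of_le (Nat.add_lt_add_left j.isLt i) h⟩ = 0
    · simp [ht]
    simp [hj heq ht]
end

section
/- If the alignment has exactly one mismatch, at position j₀ < m, then E = e_{j₀} > 0 and E' = (i + j₀) · E; consequently the quotient E'/E recovers the text position i + j₀ of the unique mismatch. (This is the correctness of steps 2–3 of the 1-mismatch algorithm.) -/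
lemma errTerm_eq_zero {n m : ℕ} (T : Fin n → ℕ) (P : Fin m → ℕ) (i : ℕ) (h : i + m ≤ n)
    (j : Fin m) (hj : ¬ isMismatch T P i h j) : errTerm T P i h j = 0 := by
  unfold isMismatch at hj
  unfold errTerm
  set t := T ⟨i + j.val, lt_of_lt_of_le (Nat.add_lt_add_left j.isLt i) h⟩ with ht
  simp only [not_and_or, not_not] at hj
  rcases hj with h1 | h2 | h3
  · simp [h1]
  · simp [h2]
  · simp [h3]

lemma errTerm_pos {n m : ℕ} (T : Fin n → ℕ) (P : Fin m → ℕ) (i : ℕ) (h : i + m ≤ n)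
    (j : Fin m) (hj : isMismatch T P i h j) : 0 < errTerm T P i h j := by
  obtain ⟨h1, h2, h3⟩ := hj
  unfold errTerm
  set t := T ⟨i + j.val, lt_of_lt_of_le (Nat.add_lt_add_left j.isLt i) h⟩ with ht
  have hsq : (0:ℤ) < ((t:ℤ) - P j)^2 := by
    have : ((t:ℤ) - P j) ≠ 0 := fun hc => h1 (by exact_mod_cast sub_eq_zero.mp hc)
    positivity
  have htpos : (0:ℤ) < t := by exact_mod_cast Nat.pos_of_ne_zero h2
  have hppos : (0:ℤ) < P j := by exact_mod_cast Nat.pos_of_ne_zero h3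
  positivity

/-- If the alignment has exactly one mismatch, at position `j₀`,
then `E = e_{j₀} > 0` and `E' = (i + j₀) · E`, so `E'/E` recovers the text position
`i + j₀` of the unique mismatch. Here `E = Σ_j e_j` and `E' = Σ_j (i+j)·e_j`. -/
theorem one_mismatch_position {n m : ℕ} (T : Fin n → ℕ) (P : Fin m → ℕ)
    (i : ℕ) (h : i + m ≤ n) (j₀ : Fin m)
    (hj₀ : isMismatch T P i h j₀)
    (huniq : ∀ j : Fin m, j ≠ j₀ → ¬ isMismatch T P i h j) :
    (∑ j : Fin m, errTerm T P i h j) = errTerm T P i h j₀ ∧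
    0 < (∑ j : Fin m, errTerm T P i h j) ∧
    (∑ j : Fin m, ((i + j.val : ℕ) : ℤ) * errTerm T P i h j) =
      ((i + j₀.val : ℕ) : ℤ) * (∑ j : Fin m, errTerm T P i h j) ∧
    (∑ j : Fin m, ((i + j.val : ℕ) : ℤ) * errTerm T P i h j) /
      (∑ j : Fin m, errTerm T P i h j) = ((i + j₀.val : ℕ) : ℤ) := by
  have hz : ∀ j : Fin m, j ≠ j₀ → errTerm T P i h j = 0 := fun j hj =>
    errTerm_eq_zero T P i h j (huniq j hj)
  have hE : (∑ j : Fin m, errTerm T P i h j) = errTerm T P i h j₀ :=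
    Finset.sum_eq_single j₀ (fun j _ hj => hz j hj) (by simp)
  have hpos := errTerm_pos T P i h j₀ hj₀
  have hE' : (∑ j : Fin m, ((i + j.val : ℕ) : ℤ) * errTerm T P i h j) =
      ((i + j₀.val : ℕ) : ℤ) * errTerm T P i h j₀ :=
    Finset.sum_eq_single j₀ (fun j _ hj => by simp [hz j hj]) (by simp)
  refine ⟨hE, hE ▸ hpos, by rw [hE, hE'], ?_⟩
  rw [hE, hE']
  exact Int.mul_ediv_cancel _ hpos.ne'
end

section
/- The alignment has exactly one mismatch (H = 1) if and only if E ≠ 0 and there exists a position j < m with e_j = E. (This is the correctness of the verification in step 4 of the 1-mismatch algorithm: since all error terms are nonnegative, a single term equal to the total sum forces all other terms to vanish.) -/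
lemma errTerm_nonneg {n m : ℕ} (T : Fin n → ℕ) (P : Fin m → ℕ) (i : ℕ) (h : i + m ≤ n)
    (j : Fin m) : 0 ≤ errTerm T P i h j := by
  unfold errTerm
  positivity

lemma errTerm_eq_zero_iff {n m : ℕ} (T : Fin n → ℕ) (P : Fin m → ℕ) (i : ℕ) (h : i + m ≤ n)
    (j : Fin m) : errTerm T P i h j = 0 ↔ ¬ isMismatch T P i h j := by
  unfold errTerm isMismatch
  simp only [mul_eq_zero, pow_eq_zero_iff two_ne_zero, sub_eq_zero, Nat.cast_inj,
    Nat.cast_eq_zero, not_and_or, not_not]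
  tauto

/-- The alignment has exactly one mismatch (`H = 1`) iff `E ≠ 0`
and some single error term equals the whole sum `E`. -/
theorem hamming_eq_one_iff {n m : ℕ} (T : Fin n → ℕ) (P : Fin m → ℕ)
    (i : ℕ) (h : i + m ≤ n) :
    (Finset.univ.filter (isMismatch T P i h)).card = 1 ↔
      ((∑ j : Fin m, errTerm T P i h j) ≠ 0 ∧
        ∃ j : Fin m, errTerm T P i h j = ∑ j' : Fin m, errTerm T P i h j') := by
  constructor
  · intro hc
    obtain ⟨j0, hj0⟩ := Finset.card_eq_one.mp hc
    have hmem : ∀ j : Fin m, isMismatch T P i h j ↔ j = j0 := by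
      intro j
      constructor
      · intro hj
        have : j ∈ Finset.univ.filter (isMismatch T P i h) := by
          simp [hj]
        rw [hj0] at this; simpa using this
      · rintro rfl
        have : j ∈ Finset.univ.filter (isMismatch T P i h) := by
          rw [hj0]; simp
        simpa using this
    have hsum : (∑ j : Fin m, errTerm T P i h j) = errTerm T P i h j0 := by
      rw [Finset.sum_eq_single j0]
      · intro b _ hb
        rw [errTerm_eq_zero_iff]
        intro hmis
        exact hb ((hmem b).mp hmis)
      · intro hb; exact absurd (Finset.mem_univ j0) hb
    have hmis0 : isMismatch T P i h j0 := (hmem j0).mpr rfl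
    have hne : errTerm T P i h j0 ≠ 0 := by
      rw [Ne, errTerm_eq_zero_iff, not_not]; exact hmis0
    rw [hsum]
    exact ⟨hne, j0, rfl⟩
  · rintro ⟨hE, j0, hj0⟩
    have hzero : ∀ b : Fin m, b ≠ j0 → errTerm T P i h b = 0 := by
      intro b hb
      have hsplit : (∑ j : Fin m, errTerm T P i h j) =
          errTerm T P i h j0 + ∑ j ∈ Finset.univ.erase j0, errTerm T P i h j := by
        rw [Finset.add_sum_erase _ _ (Finset.mem_univ j0)]
      have hrest : (∑ j ∈ Finset.univ.erase j0, errTerm T P i h j) = 0 := by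
        have := hsplit
        rw [← hj0] at this
        linarith
      have := (Finset.sum_eq_zero_iff_of_nonneg
        (fun j _ => errTerm_nonneg T P i h j)).mp hrest b (by simp [hb])
      exact this
    rw [Finset.card_eq_one]
    refine ⟨j0, Finset.ext fun b => ?_⟩
    simp only [Finset.mem_filter, Finset.mem_univ, true_and, Finset.mem_singleton]
    constructor
    · intro hmis
      by_contra hb
      exact ((errTerm_eq_zero_iff T P i h b).mp (hzero b hb)) hmis
    · rintro rfl
      by_contra hmis
      have : errTerm T P i h b = 0 := (errTerm_eq_zero_iff T P i h b).mpr hmis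
      apply hE
      rw [← hj0, this]
end

section
/- Let T : Fin n → σ be a text, P : Fin m → σ a pattern, and Γ ⊆ σ a set of characters. For each alignment offset i with i + m ≤ n, let M_i = |{ j < m : T(i+j) = P(j) and P(j) ∈ Γ }| be the number of marks at alignment i. Then Σ_i M_i ≤ Σ_{α ∈ Γ} f(α) · F(α), where f(α) = |{ j < m : P(j) = α }| and F(α) = |{ p < n : T(p) = α }|; consequently, for every k ≥ 1, k · |{ i : M_i ≥ k }| ≤ Σ_{α ∈ Γ} f(α) · F(α). (This double-counting bound shows that if the marking phase costs B, at most B/k alignments survive the filter, as used in the analysis of Knapsack k-mismatches.) -/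
/-!
Every mark is a pair (pattern position `j`, text position `p`) with `P j = T p ∈ Γ`, found at
the alignment `i = p - j`. So distinct marks, over all alignments, are distinct such pairs, and
the pairs whose common character is `α` number `f(α) F(α)`. The bound for alignments with at
least `k` marks is Markov's inequality.
-/

open scoped Classical

/-- The number of marks `M_i` of alignment offset `i`: the number of pattern
positions `j < m` with `T(i+j) = P(j)` and `P(j) ∈ Γ`. (For valid alignments,
`i + m ≤ n`, the bounds check always succeeds.) -/
noncomputable def marks {σ : Type*} {n m : ℕ} (T : Fin n → σ) (P : Fin m → σ)
    (Γ : Finset σ) (i : ℕ) : ℕ :=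
  (Finset.univ.filter (fun j : Fin m =>
    if hj : i + j.val < n then T ⟨i + j.val, hj⟩ = P j ∧ P j ∈ Γ else False)).card

open Finset

section MatchingPairs

variable {ι κ σ : Type*} [Fintype ι] [Fintype κ]

noncomputable def matchingPairs (T : κ → σ) (P : ι → σ) (Γ : Finset σ) : Finset (ι × κ) :=
  {x | P x.1 ∈ Γ ∧ T x.2 = P x.1}

theorem card_matchingPairs (T : κ → σ) (P : ι → σ) (Γ : Finset σ) :
    #(matchingPairs T P Γ) = ∑ a ∈ Γ, #{j | P j = a} * #{p | T p = a} := by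
  rw [card_eq_sum_card_fiberwise (f := fun x => P x.1) (t := Γ)
    (fun x hx => (mem_filter.mp hx).2.1)]
  refine sum_congr rfl fun a ha => ?_
  rw [← card_product]
  congr 1
  ext ⟨j, p⟩
  simp only [matchingPairs, mem_filter, mem_product, mem_univ, true_and]
  constructor
  · rintro ⟨⟨-, hTP⟩, hPa⟩
    exact ⟨hPa, hTP.trans hPa⟩
  · rintro ⟨hPa, hTa⟩
    exact ⟨⟨hPa ▸ ha, hTa.trans hPa.symm⟩, hPa⟩

end MatchingPairs

section Marks

variable {σ : Type*} {n m : ℕ} (T : Fin n → σ) (P : Fin m → σ) (Γ : Finset σ)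

theorem marks_eq_card_matchingPairs (i : ℕ) :
    marks T P Γ i = #{x ∈ matchingPairs T P Γ | (x.2 : ℕ) = i + x.1} := by
  symm
  refine card_bij (fun x _ => x.1) ?_ ?_ ?_
  · rintro ⟨j, p⟩ hx
    simp only [matchingPairs, mem_filter, mem_univ, true_and] at hx ⊢
    obtain ⟨⟨hΓ, hTP⟩, hp⟩ := hx
    rw [dif_pos (hp ▸ p.isLt)]
    exact ⟨(congrArg T (Fin.ext hp.symm)).trans hTP, hΓ⟩
  · rintro ⟨j, p⟩ hx ⟨j', p'⟩ hx' (rfl : j = j')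
    simp only [mem_filter] at hx hx'
    exact Prod.ext rfl (Fin.ext (hx.2.trans hx'.2.symm))
  · intro j hj
    simp only [mem_filter, mem_univ, true_and] at hj
    split_ifs at hj with hlt
    exact ⟨(j, ⟨i + j, hlt⟩), by simpa [matchingPairs, hj.2] using hj.1, rfl⟩

theorem sum_marks_le_card_matchingPairs (s : Finset ℕ) :
    ∑ i ∈ s, marks T P Γ i ≤ #(matchingPairs T P Γ) := by
  let r : ℕ → Fin m × Fin n → Prop := fun i x => (x.2 : ℕ) = i + x.1
  calc ∑ i ∈ s, marks T P Γ i
      = ∑ i ∈ s, #((matchingPairs T P Γ).bipartiteAbove r i) := by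
        simp only [marks_eq_card_matchingPairs, bipartiteAbove, r]
    _ = ∑ x ∈ matchingPairs T P Γ, #(s.bipartiteBelow r x) :=
        sum_card_bipartiteAbove_eq_sum_card_bipartiteBelow r
    _ ≤ ∑ _x ∈ matchingPairs T P Γ, 1 := by
        refine sum_le_sum fun x _ => card_le_one.mpr fun i hi i' hi' => ?_
        simp only [mem_bipartiteBelow, r] at hi hi'
        omega
    _ = #(matchingPairs T P Γ) := (card_eq_sum_ones _).symm

end Marks

theorem mul_card_filter_le_le_sum {α : Type*} (s : Finset α) (f : α → ℕ) (k : ℕ) :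
    k * #{i ∈ s | k ≤ f i} ≤ ∑ i ∈ s, f i :=
  calc k * #{i ∈ s | k ≤ f i}
      ≤ ∑ i ∈ s with k ≤ f i, f i := by
        rw [mul_comm]
        exact card_nsmul_le_sum _ _ _ fun i hi => (mem_filter.mp hi).2
    _ ≤ ∑ i ∈ s, f i := sum_le_sum_of_subset (filter_subset _ _)

theorem marks_double_counting_general {σ : Type*} {n m : ℕ}
    (T : Fin n → σ) (P : Fin m → σ) (Γ : Finset σ) (k : ℕ) :
    (∑ i ∈ Finset.range (n - m + 1), marks T P Γ i
        ≤ ∑ a ∈ Γ, (Finset.univ.filter (fun j : Fin m => P j = a)).card *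
            (Finset.univ.filter (fun p : Fin n => T p = a)).card) ∧
    (k * ((Finset.range (n - m + 1)).filter (fun i => k ≤ marks T P Γ i)).card
        ≤ ∑ a ∈ Γ, (Finset.univ.filter (fun j : Fin m => P j = a)).card *
            (Finset.univ.filter (fun p : Fin n => T p = a)).card) := by
  have total : ∑ i ∈ range (n - m + 1), marks T P Γ i
      ≤ ∑ a ∈ Γ, #{j | P j = a} * #{p | T p = a} :=
    card_matchingPairs T P Γ ▸ sum_marks_le_card_matchingPairs T P Γ _
  exact ⟨total, (mul_card_filter_le_le_sum _ _ k).trans total⟩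

/-- double counting of marks. The total number of marks over all
alignments is at most `Σ_{α ∈ Γ} f(α)·F(α)`, where `f` and `F` are the pattern and
text frequencies; consequently at most `(Σ_{α ∈ Γ} f(α)·F(α))/k` alignments receive
at least `k` marks. -/
theorem marks_double_counting {σ : Type*} [Fintype σ] {n m : ℕ} (hmn : m ≤ n)
    (T : Fin n → σ) (P : Fin m → σ) (Γ : Finset σ) (k : ℕ) (hk : 1 ≤ k) :
    (∑ i ∈ Finset.range (n - m + 1), marks T P Γ i
        ≤ ∑ a ∈ Γ, (Finset.univ.filter (fun j : Fin m => P j = a)).card *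
            (Finset.univ.filter (fun p : Fin n => T p = a)).card) ∧
    (k * ((Finset.range (n - m + 1)).filter (fun i => k ≤ marks T P Γ i)).card
        ≤ ∑ a ∈ Γ, (Finset.univ.filter (fun j : Fin m => P j = a)).card *
            (Finset.univ.filter (fun p : Fin n => T p = a)).card) :=
  marks_double_counting_general T P Γ k
end

section
/- Let σ be a finite type, f, F : σ → ℕ with Σ_{α ∈ σ} F(α) ≤ n, and let C be a finite subset of σ such that f(α) ≥ s for every α ∈ C, where s ≥ 1 and s · |C| ≥ 2k. Then there exists x : σ → ℕ with x(α) ≤ min(f(α), s) for all α, x(α) = 0 for α ∉ C, Σ_{α} x(α) = 2k, and Σ_{α} x(α) · F(α) ≤ s · n. (This is the feasibility claim in the analysis of Knapsack k-mismatches: if more than 2k/(B/n) characters each occur at least B/n times in the pattern, then 2k pattern-position instances can be chosen whose total marking cost does not exceed the budget.) -/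
open Finset in
lemma exists_bounded_on_finset {σ : Type*} (s t : ℕ) (C : Finset σ)
    (ht : t ≤ s * C.card) :
    ∃ x : σ → ℕ, (∀ a, x a ≤ s) ∧ (∀ a ∉ C, x a = 0) ∧ ∑ a ∈ C, x a = t := by
  classical
  induction C using Finset.induction generalizing t with
  | empty =>
    simp at ht
    exact ⟨fun _ => 0, fun _ => Nat.zero_le _, fun _ _ => rfl, by simp [ht]⟩
  | @insert b D hb ih =>
    have h2 : t - min t s ≤ s * D.card := by
      rcases le_total t s with h | h
      · simp [min_eq_left h]
      · have : t - s ≤ s * D.card := by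
          rw [Finset.card_insert_of_notMem hb, Nat.mul_succ] at ht
          omega
        simpa [min_eq_right h] using this
    obtain ⟨x, hx1, hx2, hx3⟩ := ih _ h2
    refine ⟨fun a => if a = b then min t s else x a, ?_, ?_, ?_⟩
    · intro a; by_cases h : a = b <;> simp [h, min_le_right, hx1 a]
    · intro a ha
      have : a ≠ b := fun h => ha (by simp [h])
      simp [this]; exact hx2 a (fun h => ha (by simp [h]))
    · rw [Finset.sum_insert hb]
      have : ∑ a ∈ D, (if a = b then min t s else x a) = ∑ a ∈ D, x a :=
        Finset.sum_congr rfl fun a ha => by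
          have : a ≠ b := fun h => hb (h ▸ ha); simp [this]
      simp only [if_pos rfl, ite_true, this, hx3]
      omega

/-- knapsack feasibility in the analysis of Knapsack k-mismatches.
If every character of `C` occurs at least `s ≥ 1` times in the pattern
(`f(α) ≥ s` for `α ∈ C`), the total text frequency satisfies `Σ_α F(α) ≤ n`, and
`s · |C| ≥ 2k`, then one can select `x(α)` instances of each character `α`
(at most `min(f(α), s)` of each, none outside `C`) totalling exactly `2k` instances
with total marking cost `Σ_α x(α)·F(α) ≤ s · n`. -/
theorem knapsack_feasibility {σ : Type*} [Fintype σ]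
    (f F : σ → ℕ) (n s k : ℕ) (hs : 1 ≤ s)
    (hF : ∑ a : σ, F a ≤ n)
    (C : Finset σ) (hC : ∀ a ∈ C, s ≤ f a) (hCk : 2 * k ≤ s * C.card) :
    ∃ x : σ → ℕ,
      (∀ a : σ, x a ≤ min (f a) s) ∧
      (∀ a ∉ C, x a = 0) ∧
      (∑ a : σ, x a = 2 * k) ∧
      (∑ a : σ, x a * F a ≤ s * n) := by
  classical
  obtain ⟨x, hx1, hx2, hx3⟩ := exists_bounded_on_finset s (2 * k) C hCk
  refine ⟨x, ?_, hx2, ?_, ?_⟩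
  · intro a
    by_cases h : a ∈ C
    · exact le_min (le_trans (hx1 a) (hC a h)) (hx1 a)
    · simp [hx2 a h]
  · rw [← hx3]
    exact (Finset.sum_subset (Finset.subset_univ C)
      (fun a _ ha => hx2 a ha)).symm
  · calc ∑ a : σ, x a * F a ≤ ∑ a : σ, s * F a :=
          Finset.sum_le_sum fun a _ => Nat.mul_le_mul_right _ (hx1 a)
      _ = s * ∑ a : σ, F a := by rw [Finset.mul_sum]
      _ ≤ s * n := Nat.mul_le_mul_left _ hF
end
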